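/- arXiv:1707.01540 — 4 statements merged into one kernel-verified Lean document; each statement's English description precedes it below -/
import Mathlib

section
/- There exists a constant C such that for every even positive integer m, every perfect matching M on [m], and all x₁,…,x_m ∈ [0,1], the product over all unordered pairs (i₁,i₂) with i₂ ≠ M(i₁) of (1 − x_{i₁} x_{i₂}) is at most C · exp(−s²/2), where s = x₁ + ⋯ + x_m. -/
open Finset

private lemma key_ineq {t : ℝ} (h0 : 0 ≤ t) (h1 : t ≤ 1) :
    1 - t ≤ Real.exp (-(t + t ^ 2 / 2)) := by
  have hexp : Real.exp t ≤ 1 + t + t ^ 2 / 2 + (2 / 9) * t ^ 3 := by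
    have h := Real.exp_bound' h0 h1 (n := 3) (by norm_num)
    have hs : (∑ m ∈ Finset.range 3, t ^ m / m.factorial) = 1 + t + t ^ 2 / 2 := by
      simp [Finset.sum_range_succ, Nat.factorial]
    rw [hs] at h
    calc Real.exp t ≤ 1 + t + t ^ 2 / 2 + t ^ 3 * (3 + 1) / (Nat.factorial 3 * 3) := h
      _ ≤ 1 + t + t ^ 2 / 2 + (2 / 9) * t ^ 3 := by
          simp [Nat.factorial]; nlinarith [pow_nonneg h0 3]
  have hmain : (1 - t) * Real.exp t ≤ 1 - t ^ 2 / 2 := by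
    have h2 : (1 - t) * Real.exp t ≤ (1 - t) * (1 + t + t ^ 2 / 2 + (2 / 9) * t ^ 3) :=
      mul_le_mul_of_nonneg_left hexp (by linarith)
    nlinarith [pow_nonneg h0 3, pow_nonneg h0 4]
  have h3 : 1 - t ^ 2 / 2 ≤ Real.exp (-(t ^ 2 / 2)) := by
    have := Real.add_one_le_exp (-(t ^ 2 / 2)); linarith
  have hpos := Real.exp_pos t
  have h4 : (1 - t) * Real.exp t ≤ Real.exp (-(t + t ^ 2 / 2)) * Real.exp t := by
    rw [← Real.exp_add]
    have he : -(t + t ^ 2 / 2) + t = -(t ^ 2 / 2) := by ring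
    rw [he]
    exact le_trans hmain h3
  exact le_of_mul_le_mul_right h4 hpos

private lemma pairs_sum {m : ℕ} (y : Fin m → ℝ) :
    (∑ i, y i) ^ 2 = ∑ i, y i ^ 2 +
      2 * ∑ p ∈ Finset.univ.filter (fun p : Fin m × Fin m => p.1 < p.2), y p.1 * y p.2 := by
  classical
  have h1 : (∑ i, y i) ^ 2 = ∑ p ∈ (Finset.univ : Finset (Fin m × Fin m)), y p.1 * y p.2 := by
    rw [sq, Finset.sum_mul_sum, ← Finset.univ_product_univ, Finset.sum_product]
  have hsplit1 := Finset.sum_filter_add_sum_filter_not (Finset.univ : Finset (Fin m × Fin m))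
      (fun p => p.1 < p.2) (fun p => y p.1 * y p.2)
  have hsplit2 := Finset.sum_filter_add_sum_filter_not
      (Finset.univ.filter (fun p : Fin m × Fin m => ¬ p.1 < p.2))
      (fun p => p.1 = p.2) (fun p => y p.1 * y p.2)
  have hdiag : ∑ p ∈ (Finset.univ.filter (fun p : Fin m × Fin m => ¬ p.1 < p.2)).filter
      (fun p => p.1 = p.2), y p.1 * y p.2 = ∑ i, y i ^ 2 := by
    refine Finset.sum_nbij' (fun p => p.1) (fun i => (i, i)) ?_ ?_ ?_ ?_ ?_
    · intro a ha; simp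
    · intro a ha; simp
    · intro a ha
      simp only [Finset.mem_filter] at ha
      exact Prod.ext rfl ha.2
    · intro a ha; rfl
    · intro a ha
      simp only [Finset.mem_filter] at ha
      rw [← ha.2, sq]
  have hgt : ∑ p ∈ (Finset.univ.filter (fun p : Fin m × Fin m => ¬ p.1 < p.2)).filter
      (fun p => ¬ p.1 = p.2), y p.1 * y p.2 =
      ∑ p ∈ Finset.univ.filter (fun p : Fin m × Fin m => p.1 < p.2), y p.1 * y p.2 := by
    refine Finset.sum_nbij' Prod.swap Prod.swap ?_ ?_ ?_ ?_ ?_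
    · intro a ha
      simp only [Finset.mem_filter, Finset.mem_univ, true_and, not_lt] at ha ⊢
      exact lt_of_le_of_ne ha.1 (Ne.symm ha.2)
    · intro a ha
      simp only [Finset.mem_filter, Finset.mem_univ, true_and, not_lt] at ha ⊢
      exact ⟨le_of_lt ha, ne_of_gt ha⟩
    · intro a _; rfl
    · intro a _; rfl
    · intro a _; simp [mul_comm]
  rw [h1, ← hsplit1, ← hsplit2, hdiag, hgt]
  ring

private lemma matched_sum_le {m : ℕ} (M : Fin m → Fin m) (hM : Function.Involutive M)
    (x : Fin m → ℝ) (hx : ∀ i, x i ∈ Set.Icc (0:ℝ) 1) :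
    ∑ p ∈ Finset.univ.filter (fun p : Fin m × Fin m => p.1 < p.2 ∧ p.2 = M p.1),
      x p.1 * x p.2 ≤ ∑ i, x i ^ 2 := by
  classical
  set T := Finset.univ.filter (fun p : Fin m × Fin m => p.1 < p.2 ∧ p.2 = M p.1) with hT
  have h1 : ∑ p ∈ T, x p.1 * x p.2 = ∑ p ∈ T, x p.1 * x (M p.1) := by
    refine Finset.sum_congr rfl ?_
    intro p hp
    simp only [hT, Finset.mem_filter] at hp
    rw [hp.2.2]
  have hinj : ∀ p ∈ T, ∀ q ∈ T, p.1 = q.1 → p = q := by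
    intro p hp q hq h
    simp only [hT, Finset.mem_filter] at hp hq
    exact Prod.ext h (by rw [hp.2.2, hq.2.2, h])
  have h2 : ∑ p ∈ T, x p.1 * x (M p.1) = ∑ i ∈ T.image Prod.fst, x i * x (M i) :=
    (Finset.sum_image (f := fun i => x i * x (M i)) hinj).symm
  have h3 : ∑ i ∈ T.image Prod.fst, x i * x (M i) ≤ ∑ i, x i * x (M i) := by
    refine Finset.sum_le_sum_of_subset_of_nonneg (Finset.subset_univ _) ?_
    intro i _ _
    exact mul_nonneg (hx i).1 (hx (M i)).1
  have h4 : ∑ i, x i * x (M i) ≤ ∑ i, (x i ^ 2 + x (M i) ^ 2) / 2 := by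
    refine Finset.sum_le_sum ?_
    intro i _
    nlinarith [sq_nonneg (x i - x (M i))]
  have h5 : ∑ i, x (M i) ^ 2 = ∑ i, x i ^ 2 :=
    Fintype.sum_bijective M hM.bijective _ _ (fun i => rfl)
  calc ∑ p ∈ T, x p.1 * x p.2 ≤ ∑ i, (x i ^ 2 + x (M i) ^ 2) / 2 := by
        rw [h1, h2]; exact le_trans h3 h4
    _ = ∑ i, x i ^ 2 := by
        rw [← Finset.sum_div, Finset.sum_add_distrib, h5]; ring
  

/-- There is a constant `C` such that for every even `m`, every perfect matching `M` on `[m]`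
(a fixed-point-free involution), and all `x ∈ [0,1]^m`, the product of `1 - x_{i₁} x_{i₂}`
over all unordered pairs of distinct indices not matched under `M` is at most
`C · exp(-s²/2)`, where `s = ∑ xᵢ`. -/
theorem prod_unmatched_pairs_le :
    ∃ C : ℝ, 0 < C ∧ ∀ (m : ℕ), Even m → ∀ (M : Fin m → Fin m),
      Function.Involutive M → (∀ i, M i ≠ i) →
      ∀ x : Fin m → ℝ, (∀ i, x i ∈ Set.Icc (0:ℝ) 1) →
      (∏ p ∈ Finset.univ.filter
          (fun p : Fin m × Fin m => p.1 < p.2 ∧ p.2 ≠ M p.1),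
        (1 - x p.1 * x p.2))
      ≤ C * Real.exp (-(∑ i, x i) ^ 2 / 2) := by
  classical
  refine ⟨Real.exp 6, Real.exp_pos 6, ?_⟩
  intro m _ M hM _ x hx
  set S := Finset.univ.filter (fun p : Fin m × Fin m => p.1 < p.2 ∧ p.2 ≠ M p.1) with hSdef
  set T := Finset.univ.filter (fun p : Fin m × Fin m => p.1 < p.2) with hTdef
  set Tm := Finset.univ.filter (fun p : Fin m × Fin m => p.1 < p.2 ∧ p.2 = M p.1) with hTmdef
  have hx01 : ∀ p : Fin m × Fin m, 0 ≤ x p.1 * x p.2 ∧ x p.1 * x p.2 ≤ 1 := fun p =>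
    ⟨mul_nonneg (hx p.1).1 (hx p.2).1, mul_le_one₀ (hx p.1).2 (hx p.2).1 (hx p.2).2⟩
  -- Step 1 : bound the product by an exponential
  have step1 : ∏ p ∈ S, (1 - x p.1 * x p.2) ≤
      Real.exp (-∑ p ∈ S, (x p.1 * x p.2 + (x p.1 * x p.2) ^ 2 / 2)) := by
    rw [← Finset.sum_neg_distrib, Real.exp_sum]
    exact Finset.prod_le_prod (fun p _ => by linarith [(hx01 p).2])
      (fun p _ => key_ineq (hx01 p).1 (hx01 p).2)
  -- splitting sums over T into S and Tm
  have key : ∀ f : Fin m × Fin m → ℝ, ∑ p ∈ S, f p = ∑ p ∈ T, f p - ∑ p ∈ Tm, f p := by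
    intro f
    have h := Finset.sum_filter_add_sum_filter_not T (fun p => p.2 = M p.1) f
    rw [hTdef, Finset.filter_filter, Finset.filter_filter] at h
    have e1 : Finset.univ.filter (fun p : Fin m × Fin m => p.1 < p.2 ∧ p.2 = M p.1) = Tm := rfl
    have e2 : Finset.univ.filter (fun p : Fin m × Fin m => p.1 < p.2 ∧ ¬ p.2 = M p.1) = S := by
      rw [hSdef]
    rw [e1, e2] at h
    linarith [h]
  have hT1 := pairs_sum x
  have hT2 := pairs_sum (fun i => x i ^ 2)
  have hT2' : ∑ p ∈ T, (x p.1 * x p.2) ^ 2 = ∑ p ∈ T, x p.1 ^ 2 * x p.2 ^ 2 := by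
    refine Finset.sum_congr rfl fun p _ => ?_
    rw [mul_pow]
  have hm1 : ∑ p ∈ Tm, x p.1 * x p.2 ≤ ∑ i, x i ^ 2 := matched_sum_le M hM x hx
  have hm2 : ∑ p ∈ Tm, (x p.1 * x p.2) ^ 2 ≤ ∑ p ∈ Tm, x p.1 * x p.2 := by
    refine Finset.sum_le_sum fun p _ => ?_
    nlinarith [(hx01 p).1, (hx01 p).2]
  have hP : ∑ i, (x i ^ 2) ^ 2 ≤ ∑ i, x i ^ 2 := by
    refine Finset.sum_le_sum fun i _ => ?_
    have ht0 : 0 ≤ x i ^ 2 := sq_nonneg _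
    have ht1 : x i ^ 2 ≤ 1 := by nlinarith [(hx i).1, (hx i).2]
    nlinarith [ht0, ht1]
  have hQ0 : (0:ℝ) ≤ ∑ i, x i ^ 2 := Finset.sum_nonneg fun i _ => sq_nonneg _
  -- Step 2 : the exponent bound
  have step2 : (∑ i, x i) ^ 2 / 2 - 6 ≤
      ∑ p ∈ S, (x p.1 * x p.2 + (x p.1 * x p.2) ^ 2 / 2) := by
    have h1 := key (fun p => x p.1 * x p.2)
    have h2 := key (fun p => (x p.1 * x p.2) ^ 2)
    rw [Finset.sum_add_distrib, ← Finset.sum_div, h1, h2, hT2']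
    nlinarith [sq_nonneg ((∑ i, x i ^ 2) - 9/2), hm1, hm2, hP, hQ0, hT1, hT2]
  calc ∏ p ∈ S, (1 - x p.1 * x p.2)
      ≤ Real.exp (-∑ p ∈ S, (x p.1 * x p.2 + (x p.1 * x p.2) ^ 2 / 2)) := step1
    _ ≤ Real.exp (6 + -(∑ i, x i) ^ 2 / 2) := by
        rw [Real.exp_le_exp]
        linarith [step2]
    _ = Real.exp 6 * Real.exp (-(∑ i, x i) ^ 2 / 2) := by rw [Real.exp_add]
end

section
/- There exists a constant C such that for every positive integer m and all x₁,…,x_m ∈ [0,1], the product over all unordered pairs (i₁,i₂) of distinct indices in [m] of (1 − x_{i₁} x_{i₂}) is at most C · exp(−s²/2), where s = x₁ + ⋯ + x_m. -/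
open Finset

/-- Swap symmetry: the sum over pairs with `p.2 < p.1` equals the sum over `p.1 < p.2`. -/
lemma swap_sum_aux (m : ℕ) (g : Fin m → Fin m → ℝ) (hg : ∀ i j, g i j = g j i) :
    ∑ p ∈ Finset.univ.filter (fun p : Fin m × Fin m => p.2 < p.1), g p.1 p.2
      = ∑ p ∈ Finset.univ.filter (fun p : Fin m × Fin m => p.1 < p.2), g p.1 p.2 := by
  apply Finset.sum_nbij' (fun p => Prod.swap p) (fun p => Prod.swap p) <;>
    simp [hg]

/-- Key identity: twice the sum over ordered pairs `i < j` of `f i * f j` equals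
`(∑ f)^2 - ∑ f^2`. -/
lemma pair_sum_aux (m : ℕ) (f : Fin m → ℝ) :
    2 * ∑ p ∈ Finset.univ.filter (fun p : Fin m × Fin m => p.1 < p.2), f p.1 * f p.2
      = (∑ i, f i) ^ 2 - ∑ i, f i ^ 2 := by
  classical
  have h1 : (∑ i, f i) ^ 2 = ∑ p : Fin m × Fin m, f p.1 * f p.2 := by
    rw [sq, Finset.sum_mul_sum, ← Finset.univ_product_univ, Finset.sum_product]
  have h2 : ∑ p : Fin m × Fin m, f p.1 * f p.2
      = (∑ p ∈ Finset.univ.filter (fun p : Fin m × Fin m => p.1 < p.2), f p.1 * f p.2)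
        + ∑ p ∈ Finset.univ.filter (fun p : Fin m × Fin m => ¬ p.1 < p.2), f p.1 * f p.2 :=
    (Finset.sum_filter_add_sum_filter_not _ _ _).symm
  have h3 : ∑ p ∈ Finset.univ.filter (fun p : Fin m × Fin m => ¬ p.1 < p.2), f p.1 * f p.2
      = (∑ p ∈ Finset.univ.filter (fun p : Fin m × Fin m => p.1 = p.2), f p.1 * f p.2)
        + ∑ p ∈ Finset.univ.filter (fun p : Fin m × Fin m => p.2 < p.1), f p.1 * f p.2 := by
    rw [← Finset.sum_filter_add_sum_filter_not
      (Finset.univ.filter (fun p : Fin m × Fin m => ¬ p.1 < p.2))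
      (fun p : Fin m × Fin m => p.1 = p.2)]
    congr 1
    · congr 1
      rw [Finset.filter_filter]
      apply Finset.filter_congr
      intro p _
      constructor
      · rintro ⟨_, h⟩; exact h
      · intro h; exact ⟨by omega, h⟩
    · congr 1
      rw [Finset.filter_filter]
      apply Finset.filter_congr
      intro p _
      constructor
      · rintro ⟨h1', h2'⟩; omega
      · intro h; exact ⟨by omega, by omega⟩
  have h4 : ∑ p ∈ Finset.univ.filter (fun p : Fin m × Fin m => p.1 = p.2), f p.1 * f p.2
      = ∑ i, f i ^ 2 := by
    rw [Finset.sum_filter]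
    rw [← Finset.univ_product_univ, Finset.sum_product]
    congr 1
    ext i
    simp [sq]
  have h5 := swap_sum_aux m (fun i j => f i * f j) (fun i j => mul_comm _ _)
  rw [h1, h2, h3, h4, h5]
  ring

/-- For `t ∈ [0,1]`, `1 - t ≤ exp (-(t + t²/4))`. -/
lemma one_sub_le_exp_aux {t : ℝ} (h0 : 0 ≤ t) (h1 : t ≤ 1) :
    1 - t ≤ Real.exp (-(t + t ^ 2 / 4)) := by
  set u := t + t ^ 2 / 4 with hu
  have hu0 : 0 ≤ u := by positivity
  have hu1 : u ≤ 5 / 4 := by nlinarith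
  have h2 : 1 - u / 4 ≤ Real.exp (-(u / 4)) := by
    have := Real.add_one_le_exp (-(u / 4)); linarith
  have h3 : (0:ℝ) ≤ 1 - u / 4 := by linarith
  have h4 : (1 - u / 4) ^ 4 ≤ (Real.exp (-(u / 4))) ^ 4 := by
    exact pow_le_pow_left₀ h3 h2 4
  have h5 : (Real.exp (-(u / 4))) ^ 4 = Real.exp (-u) := by
    rw [← Real.exp_nat_mul]; norm_num; ring_nf
  have ht2 : t ^ 2 ≤ 1 := by nlinarith
  have e1 : t ^ 4 ≤ t ^ 2 := by nlinarith [sq_nonneg t, ht2]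
  have e2 : t ^ 5 ≤ t ^ 2 := by nlinarith [sq_nonneg t, pow_nonneg h0 3, pow_nonneg h0 5]
  have h6 : 1 - t ≤ (1 - u / 4) ^ 4 := by
    rw [hu]
    nlinarith [e1, e2, sq_nonneg t, pow_nonneg h0 3, pow_nonneg h0 6, pow_nonneg h0 7,
      pow_nonneg h0 8]
  calc 1 - t ≤ (1 - u / 4) ^ 4 := h6
    _ ≤ (Real.exp (-(u / 4))) ^ 4 := h4
    _ = Real.exp (-u) := h5

/-- There is a constant `C` such that for every `m` and all `x ∈ [0,1]^m`, the product of
`1 - x_{i₁} x_{i₂}` over all unordered pairs of distinct indices in `[m]` is at most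
`C · exp(-s²/2)`, where `s = ∑ xᵢ`. -/
theorem prod_all_pairs_le :
    ∃ C : ℝ, 0 < C ∧ ∀ (m : ℕ), 0 < m →
      ∀ x : Fin m → ℝ, (∀ i, x i ∈ Set.Icc (0:ℝ) 1) →
      (∏ p ∈ Finset.univ.filter (fun p : Fin m × Fin m => p.1 < p.2),
        (1 - x p.1 * x p.2))
      ≤ C * Real.exp (-(∑ i, x i) ^ 2 / 2) := by
  refine ⟨3, by norm_num, ?_⟩
  intro m _ x hx
  have hx0 : ∀ i, 0 ≤ x i := fun i => (hx i).1
  have hx1 : ∀ i, x i ≤ 1 := fun i => (hx i).2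
  set P := Finset.univ.filter (fun p : Fin m × Fin m => p.1 < p.2) with hP
  set s := ∑ i, x i with hs
  set q := ∑ i, x i ^ 2 with hq
  set r := ∑ i, (x i ^ 2) ^ 2 with hr
  have key1 : 2 * ∑ p ∈ P, x p.1 * x p.2 = s ^ 2 - q := pair_sum_aux m x
  have key2 : 2 * ∑ p ∈ P, (x p.1 * x p.2) ^ 2 = q ^ 2 - r := by
    have := pair_sum_aux m (fun i => x i ^ 2)
    simp only [mul_pow] at this ⊢
    exact this
  have hq0 : 0 ≤ q := Finset.sum_nonneg fun i _ => sq_nonneg _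
  have hr0 : 0 ≤ r := Finset.sum_nonneg fun i _ => sq_nonneg _
  have hrq : r ≤ q := Finset.sum_le_sum fun i _ => by
    have h1 : x i ^ 2 ≤ 1 := by nlinarith [hx0 i, hx1 i]
    nlinarith [sq_nonneg (x i), h1]
  have step1 : (∏ p ∈ P, (1 - x p.1 * x p.2))
      ≤ ∏ p ∈ P, Real.exp (-(x p.1 * x p.2 + (x p.1 * x p.2) ^ 2 / 4)) := by
    apply Finset.prod_le_prod
    · intro p _
      nlinarith [hx0 p.1, hx0 p.2, hx1 p.1, hx1 p.2]
    · intro p _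
      exact one_sub_le_exp_aux (mul_nonneg (hx0 p.1) (hx0 p.2))
        (mul_le_one₀ (hx1 p.1) (hx0 p.2) (hx1 p.2))
  have step2 : ∏ p ∈ P, Real.exp (-(x p.1 * x p.2 + (x p.1 * x p.2) ^ 2 / 4))
      = Real.exp (∑ p ∈ P, -(x p.1 * x p.2 + (x p.1 * x p.2) ^ 2 / 4)) :=
    (Real.exp_sum _ _).symm
  have hsum : ∑ p ∈ P, -(x p.1 * x p.2 + (x p.1 * x p.2) ^ 2 / 4)
      = -(∑ p ∈ P, x p.1 * x p.2) - (∑ p ∈ P, (x p.1 * x p.2) ^ 2) / 4 := by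
    calc ∑ p ∈ P, -(x p.1 * x p.2 + (x p.1 * x p.2) ^ 2 / 4)
        = ∑ p ∈ P, (-(x p.1 * x p.2) + (-((x p.1 * x p.2) ^ 2)) / 4) :=
          Finset.sum_congr rfl (fun p _ => by ring)
      _ = (∑ p ∈ P, -(x p.1 * x p.2)) + (∑ p ∈ P, -((x p.1 * x p.2) ^ 2)) / 4 := by
          rw [Finset.sum_add_distrib, Finset.sum_div]
      _ = -(∑ p ∈ P, x p.1 * x p.2) - (∑ p ∈ P, (x p.1 * x p.2) ^ 2) / 4 := by
          rw [Finset.sum_neg_distrib, Finset.sum_neg_distrib]; ring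
  have step3 : ∑ p ∈ P, -(x p.1 * x p.2 + (x p.1 * x p.2) ^ 2 / 4)
      ≤ 25 / 32 - s ^ 2 / 2 := by
    rw [hsum]
    nlinarith [key1, key2, hrq, sq_nonneg (q - 5 / 2)]
  have hexp : Real.exp (∑ p ∈ P, -(x p.1 * x p.2 + (x p.1 * x p.2) ^ 2 / 4))
      ≤ Real.exp (25 / 32) * Real.exp (-s ^ 2 / 2) := by
    rw [← Real.exp_add]
    apply Real.exp_le_exp.mpr
    linarith
  have hC : Real.exp (25 / 32 : ℝ) ≤ 3 := by
    have h1 : Real.exp (25 / 32 : ℝ) ≤ Real.exp 1 := Real.exp_le_exp.mpr (by norm_num)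
    have h2 := Real.exp_one_lt_d9
    linarith
  calc (∏ p ∈ P, (1 - x p.1 * x p.2))
      ≤ Real.exp (∑ p ∈ P, -(x p.1 * x p.2 + (x p.1 * x p.2) ^ 2 / 4)) := by
        rw [← step2]; exact step1
    _ ≤ Real.exp (25 / 32) * Real.exp (-s ^ 2 / 2) := hexp
    _ ≤ 3 * Real.exp (-s ^ 2 / 2) := by
        have := Real.exp_pos (-s ^ 2 / 2)
        nlinarith
end

section
/- For every positive integer n, the n-fold integral over [0,1]^n of ∏_{1 ≤ a < b ≤ n} (1 − x_a x_b) dx is O(1/(n−1)!!); that is, there is an absolute constant C with ∫_{[0,1]^n} ∏_{a<b}(1 − x_a x_b) dx ≤ C/(n−1)!!. -/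
open MeasureTheory Real Set Filter
open scoped ENNReal

noncomputable section

lemma aux_one_sub_le_exp {u : ℝ} (h0 : 0 ≤ u) (h1 : u ≤ 1) :
    1 - u ≤ Real.exp (-(u + u ^ 2 / 2)) := by
  have hu32 : u ^ 3 ≤ u ^ 2 := pow_le_pow_of_le_one h0 h1 (by norm_num)
  have hu43 : u ^ 4 ≤ u ^ 3 := pow_le_pow_of_le_one h0 h1 (by norm_num)
  have hu42 : u ^ 4 ≤ u ^ 2 := pow_le_pow_of_le_one h0 h1 (by norm_num)
  have h5 : 0 ≤ u ^ 5 := by positivity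
  have h6 : 0 ≤ u ^ 6 := by positivity
  have habs : |(-u)| ≤ 1 := by rw [abs_neg, abs_of_nonneg h0]; exact h1
  have hb := Real.exp_bound habs (n := 4) (by norm_num)
  have hsum : ∑ m ∈ Finset.range 4, (-u) ^ m / m.factorial = 1 - u + u ^ 2 / 2 - u ^ 3 / 6 := by
    simp [Finset.sum_range_succ, Nat.factorial]
    ring
  rw [hsum, abs_neg, abs_of_nonneg h0] at hb
  norm_num [Nat.factorial] at hb
  have hlow : 1 - u + u ^ 2 / 2 - u ^ 3 / 6 - 5 * u ^ 4 / 96 ≤ Real.exp (-u) := by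
    have h := (abs_le.1 hb).1
    linarith
  have h2 : 1 - u ^ 2 / 2 ≤ Real.exp (-(u ^ 2 / 2)) := by
    have := Real.add_one_le_exp (-(u ^ 2 / 2)); linarith
  have hA : (0:ℝ) ≤ 1 - u + u ^ 2 / 2 - u ^ 3 / 6 - 5 * u ^ 4 / 96 := by nlinarith [sq_nonneg u]
  have hB : (0:ℝ) ≤ 1 - u ^ 2 / 2 := by nlinarith
  have hprod := mul_le_mul hlow h2 hB (Real.exp_nonneg _)
  have hE : Real.exp (-(u + u ^ 2 / 2)) = Real.exp (-u) * Real.exp (-(u ^ 2 / 2)) := by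
    rw [← Real.exp_add]; ring_nf
  rw [hE]
  nlinarith [hprod]

lemma aux_sum_pairs {n : ℕ} (f : Fin n → ℝ) :
    2 * ∑ p ∈ Finset.univ.filter (fun p : Fin n × Fin n => p.1 < p.2), f p.1 * f p.2
      = (∑ i, f i) ^ 2 - ∑ i, f i ^ 2 := by
  have h1 : (∑ i, f i) ^ 2 = ∑ p : Fin n × Fin n, f p.1 * f p.2 := by
    rw [sq, Finset.sum_mul_sum, ← Finset.sum_product']
    rfl
  have hsplit := Finset.sum_filter_add_sum_filter_not Finset.univ
    (fun p : Fin n × Fin n => p.1 < p.2) (fun p => f p.1 * f p.2)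
  have hsplit2 := Finset.sum_filter_add_sum_filter_not
    (Finset.univ.filter (fun p : Fin n × Fin n => ¬ p.1 < p.2))
    (fun p : Fin n × Fin n => p.2 < p.1) (fun p => f p.1 * f p.2)
  have e1 : (Finset.univ.filter (fun p : Fin n × Fin n => ¬ p.1 < p.2)).filter
      (fun p : Fin n × Fin n => p.2 < p.1)
      = Finset.univ.filter (fun p : Fin n × Fin n => p.2 < p.1) := by
    rw [Finset.filter_filter]
    apply Finset.filter_congr
    intro p _
    constructor
    · rintro ⟨-, h⟩; exact h
    · intro h; exact ⟨not_lt_of_gt h, h⟩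
  have e2 : (Finset.univ.filter (fun p : Fin n × Fin n => ¬ p.1 < p.2)).filter
      (fun p : Fin n × Fin n => ¬ p.2 < p.1)
      = Finset.univ.filter (fun p : Fin n × Fin n => p.1 = p.2) := by
    rw [Finset.filter_filter]
    apply Finset.filter_congr
    intro p _
    constructor
    · rintro ⟨h1, h2⟩; exact le_antisymm (le_of_not_gt h2) (le_of_not_gt h1)
    · intro h; exact ⟨by simp [h], by simp [h]⟩
  have hswap : ∑ p ∈ Finset.univ.filter (fun p : Fin n × Fin n => p.2 < p.1), f p.1 * f p.2
      = ∑ p ∈ Finset.univ.filter (fun p : Fin n × Fin n => p.1 < p.2), f p.1 * f p.2 := by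
    refine Finset.sum_nbij' (fun p => Prod.swap p) (fun p => Prod.swap p) ?_ ?_ ?_ ?_ ?_
    · intro a ha; simp at ha ⊢; exact ha
    · intro a ha; simp at ha ⊢; exact ha
    · intro a _; simp
    · intro a _; simp
    · intro a _; simp [mul_comm]
  have hdiag : ∑ p ∈ Finset.univ.filter (fun p : Fin n × Fin n => p.1 = p.2), f p.1 * f p.2
      = ∑ i, f i ^ 2 := by
    refine Finset.sum_nbij' (fun p => p.1) (fun i => (i, i)) ?_ ?_ ?_ ?_ ?_
    · intro a _; simp
    · intro a _; simp
    · intro a ha; simp at ha; cases a; simp_all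
    · intro a _; simp
    · intro a ha; simp at ha; simp [sq, ha]
  rw [e1, e2, hswap, hdiag] at hsplit2
  rw [← hsplit2] at hsplit
  linarith [hsplit, h1]

lemma aux_pointwise {n : ℕ} (x : Fin n → ℝ) (hx : x ∈ Set.univ.pi fun _ : Fin n => Set.Icc (0:ℝ) 1) :
    ∏ p ∈ Finset.univ.filter (fun p : Fin n × Fin n => p.1 < p.2), (1 - x p.1 * x p.2)
      ≤ Real.exp (9/16) * Real.exp (-(∑ i, x i) ^ 2 / 2) := by
  simp only [Set.mem_pi, Set.mem_univ, forall_true_left, Set.mem_Icc] at hx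
  have hx0 : ∀ i, 0 ≤ x i := fun i => (hx i).1
  have hx1 : ∀ i, x i ≤ 1 := fun i => (hx i).2
  have hu0 : ∀ p : Fin n × Fin n, 0 ≤ x p.1 * x p.2 := fun p => mul_nonneg (hx0 _) (hx0 _)
  have hu1 : ∀ p : Fin n × Fin n, x p.1 * x p.2 ≤ 1 := fun p =>
    mul_le_one₀ (hx1 _) (hx0 _) (hx1 _)
  have hstep : ∏ p ∈ Finset.univ.filter (fun p : Fin n × Fin n => p.1 < p.2), (1 - x p.1 * x p.2)
      ≤ ∏ p ∈ Finset.univ.filter (fun p : Fin n × Fin n => p.1 < p.2),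
        Real.exp (-((x p.1 * x p.2) + (x p.1 * x p.2) ^ 2 / 2)) := by
    apply Finset.prod_le_prod
    · intro p _; linarith [hu1 p]
    · intro p _; exact aux_one_sub_le_exp (hu0 p) (hu1 p)
  rw [← Real.exp_sum] at hstep
  refine hstep.trans ?_
  rw [← Real.exp_add]
  refine Real.exp_le_exp.2 ?_
  set S := ∑ i, x i with hS
  set Q := ∑ i, (x i) ^ 2 with hQ
  set Q4 := ∑ i, ((x i) ^ 2) ^ 2 with hQ4
  have hsum1 := aux_sum_pairs x
  have hsum2 := aux_sum_pairs (fun i => (x i) ^ 2)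
  have hQ4Q : Q4 ≤ Q := by
    apply Finset.sum_le_sum
    intro i _
    have h2 : x i ^ 2 ≤ 1 := pow_le_one₀ (hx0 i) (hx1 i)
    nlinarith [sq_nonneg (x i), h2]
  have hQ0 : 0 ≤ Q := Finset.sum_nonneg fun i _ => sq_nonneg _
  have hexpand : ∑ p ∈ Finset.univ.filter (fun p : Fin n × Fin n => p.1 < p.2),
      (-((x p.1 * x p.2) + (x p.1 * x p.2) ^ 2 / 2))
      = -(∑ p ∈ Finset.univ.filter (fun p : Fin n × Fin n => p.1 < p.2), x p.1 * x p.2)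
        - (∑ p ∈ Finset.univ.filter (fun p : Fin n × Fin n => p.1 < p.2),
            (x p.1) ^ 2 * (x p.2) ^ 2) / 2 := by
    rw [← Finset.sum_neg_distrib, Finset.sum_div, ← Finset.sum_sub_distrib]
    apply Finset.sum_congr rfl
    intro p _
    ring
  rw [hexpand]
  have h1 : ∑ p ∈ Finset.univ.filter (fun p : Fin n × Fin n => p.1 < p.2), x p.1 * x p.2
      = (S ^ 2 - Q) / 2 := by linarith [hsum1]
  have h2 : ∑ p ∈ Finset.univ.filter (fun p : Fin n × Fin n => p.1 < p.2), (x p.1) ^ 2 * (x p.2) ^ 2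
      = (Q ^ 2 - Q4) / 2 := by linarith [hsum2]
  rw [h1, h2]
  nlinarith [sq_nonneg (Q - 3/2)]

def piIcc (n : ℕ) : Set (Fin n → ℝ) := Set.univ.pi fun _ : Fin n => Set.Icc (0:ℝ) 1

lemma piIcc_meas (n : ℕ) : MeasurableSet (piIcc n) :=
  MeasurableSet.univ_pi fun _ => measurableSet_Icc

lemma mem_piIcc_cons {n : ℕ} (u : ℝ) (y : Fin n → ℝ) :
    Fin.cons u y ∈ piIcc (n+1) ↔ u ∈ Set.Icc (0:ℝ) 1 ∧ y ∈ piIcc n := by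
  simp only [piIcc, Set.mem_pi, Set.mem_univ, forall_true_left]
  rw [Fin.forall_fin_succ]
  simp [Fin.cons_zero, Fin.cons_succ]

lemma marg {n : ℕ} (f : ℝ → ℝ≥0∞) (hf : Measurable f) :
    ∫⁻ x in piIcc (n+1), f (∑ i, x i) =
      ∫⁻ u in Set.Icc (0:ℝ) 1, ∫⁻ y in piIcc n, f (u + ∑ i, y i) := by
  have hmp := (measurePreserving_piFinSuccAbove (fun _ : Fin (n+1) => (volume : Measure ℝ)) 0).symm
  set e := MeasurableEquiv.piFinSuccAbove (fun _ : Fin (n+1) => ℝ) 0 with he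
  set F : (Fin (n+1) → ℝ) → ℝ≥0∞ := (piIcc (n+1)).indicator (fun x => f (∑ i, x i)) with hFdef
  have hsum_meas : Measurable fun x : Fin (n+1) → ℝ => ∑ i, x i :=
    Finset.measurable_sum _ fun i _ => measurable_pi_apply i
  have hF : Measurable F := (hf.comp hsum_meas).indicator (piIcc_meas (n+1))
  have key : ∀ p : ℝ × (Fin n → ℝ), F (e.symm p)
      = (Set.Icc (0:ℝ) 1).indicator
          (fun u => (piIcc n).indicator (fun y => f (u + ∑ i, y i)) p.2) p.1 := by
    rintro ⟨u, y⟩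
    have hcons : e.symm (u, y) = Fin.cons u y := by
      rw [he, MeasurableEquiv.piFinSuccAbove_symm_apply]
      simp [Fin.insertNthEquiv, Fin.insertNth_zero]
    rw [hcons]
    simp only [hFdef, Set.indicator_apply, mem_piIcc_cons, Fin.sum_cons]
    by_cases hu : u ∈ Set.Icc (0:ℝ) 1 <;> by_cases hy : y ∈ piIcc n <;>
      simp [Set.indicator_apply, mem_piIcc_cons, hu, hy, Fin.sum_cons]
  calc ∫⁻ x in piIcc (n+1), f (∑ i, x i)
      = ∫⁻ x, F x := (lintegral_indicator (piIcc_meas (n+1)) _).symm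
    _ = ∫⁻ p : ℝ × (Fin n → ℝ), F (e.symm p)
          ∂((volume : Measure ℝ).prod (Measure.pi fun _ : Fin n => (volume : Measure ℝ))) := by
        rw [volume_pi]
        exact (hmp.lintegral_comp hF).symm
    _ = ∫⁻ u : ℝ, ∫⁻ y : Fin n → ℝ, F (e.symm (u, y))
          ∂(Measure.pi fun _ : Fin n => (volume : Measure ℝ)) ∂(volume : Measure ℝ) :=
        lintegral_prod _ ((hF.comp e.symm.measurable).aemeasurable)
    _ = ∫⁻ u : ℝ, (Set.Icc (0:ℝ) 1).indicator
          (fun u' => ∫⁻ y in piIcc n, f (u' + ∑ i, y i)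
            ∂(Measure.pi fun _ : Fin n => (volume : Measure ℝ))) u := by
        apply lintegral_congr
        intro u
        have hptwise : (∫⁻ y, F (e.symm (u, y)) ∂(Measure.pi fun _ : Fin n => (volume : Measure ℝ)))
            = ∫⁻ y, (Set.Icc (0:ℝ) 1).indicator
                (fun u' => (piIcc n).indicator (fun y' => f (u' + ∑ i, y' i)) y) u
              ∂(Measure.pi fun _ : Fin n => (volume : Measure ℝ)) :=
          lintegral_congr fun y => key (u, y)
        rw [hptwise]
        by_cases hu : u ∈ Set.Icc (0:ℝ) 1
        · simp only [Set.indicator_of_mem hu]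
          exact lintegral_indicator (piIcc_meas n) _
        · simp [Set.indicator_of_notMem hu]
    _ = ∫⁻ u in Set.Icc (0:ℝ) 1, ∫⁻ y in piIcc n, f (u + ∑ i, y i) := by
        rw [lintegral_indicator measurableSet_Icc, ← volume_pi]

def Ee (t : ℝ) : ℝ := Real.exp (-t ^ 2 / 2)

lemma Ee_cont : Continuous Ee := by
  unfold Ee
  exact Real.continuous_exp.comp (by continuity)

lemma Ee_pos (t : ℝ) : 0 < Ee t := Real.exp_pos _

lemma meas_ofReal_Ee (t : ℝ) : Measurable fun r : ℝ => ENNReal.ofReal (Ee (t + r)) :=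
  ENNReal.measurable_ofReal.comp ((Ee_cont.comp (by continuity)).measurable)

def G (n : ℕ) (t : ℝ) : ℝ≥0∞ := ∫⁻ x in piIcc n, ENNReal.ofReal (Ee (t + ∑ i, x i))

def Psi (n : ℕ) (t : ℝ) : ℝ≥0∞ :=
  ∫⁻ s in Set.Ioi (0:ℝ), ENNReal.ofReal (s ^ n / n.factorial) * ENNReal.ofReal (Ee (s + t))

lemma G_zero (t : ℝ) : G 0 t = ENNReal.ofReal (Ee t) := by
  rw [G]
  have h : piIcc 0 = Set.univ := by ext x; simp [piIcc]
  rw [h, Measure.restrict_univ]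
  simp only [Finset.univ_eq_empty, Finset.sum_empty, add_zero]
  rw [lintegral_const, volume_pi, Measure.pi_univ]
  simp

lemma G_succ (n : ℕ) (t : ℝ) : G (n+1) t = ∫⁻ u in Set.Icc (0:ℝ) 1, G n (t + u) := by
  rw [G, marg _ (meas_ofReal_Ee t)]
  exact lintegral_congr fun u => lintegral_congr fun y => by rw [add_assoc]

lemma shift_Ioi (g : ℝ → ℝ≥0∞) (s : ℝ) :
    ∫⁻ u in Set.Ioi (0:ℝ), g (u + s) = ∫⁻ v in Set.Ioi s, g v := by
  have h1 : ∫⁻ u in Set.Ioi (0:ℝ), g (u + s)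
      = ∫⁻ u, (Set.Ioi (0:ℝ)).indicator (fun u => g (u + s)) u :=
    (lintegral_indicator measurableSet_Ioi _).symm
  have h2 : ∀ u : ℝ, (Set.Ioi (0:ℝ)).indicator (fun u => g (u + s)) u
      = (Set.Ioi s).indicator g (u + s) := by
    intro u; by_cases hu : u ∈ Set.Ioi (0:ℝ)
    · rw [Set.indicator_of_mem hu, Set.indicator_of_mem (by simp at hu ⊢; linarith)]
    · rw [Set.indicator_of_notMem hu, Set.indicator_of_notMem (by simp at hu ⊢; linarith)]
  rw [h1, lintegral_congr h2,
    lintegral_add_right_eq_self (fun v => (Set.Ioi s).indicator g v) s,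
    lintegral_indicator measurableSet_Ioi]

lemma slice_bound (n : ℕ) (v : ℝ) :
    ∫⁻ s in Set.Ioo (0:ℝ) v, ENNReal.ofReal (s ^ n / n.factorial)
      ≤ ENNReal.ofReal (v ^ (n+1) / (n+1).factorial) := by
  rcases le_or_gt v 0 with hv | hv
  · rw [Set.Ioo_eq_empty (by intro h; exact absurd (h.trans_le hv) (lt_irrefl 0))]
    simp
  · have hInt : IntegrableOn (fun s : ℝ => s ^ n / n.factorial) (Set.Ioo 0 v) := by
      apply IntegrableOn.mono_set (t := Set.Icc (0:ℝ) v) _ Set.Ioo_subset_Icc_self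
      exact ContinuousOn.integrableOn_compact isCompact_Icc
        (Continuous.continuousOn (by continuity))
    have hnn : 0 ≤ᵐ[volume.restrict (Set.Ioo (0:ℝ) v)] fun s : ℝ => s ^ n / n.factorial := by
      refine (ae_restrict_iff' measurableSet_Ioo).2 (Filter.Eventually.of_forall ?_)
      intro s hs
      have : (0:ℝ) ≤ s := le_of_lt hs.1
      positivity
    rw [← ofReal_integral_eq_lintegral_ofReal hInt hnn]
    apply ENNReal.ofReal_le_ofReal
    have h1 : ∫ s in Set.Ioo (0:ℝ) v, s ^ n / n.factorial
        = (∫ s in Set.Ioo (0:ℝ) v, s ^ n) / n.factorial := integral_div _ _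
    have h2 : ∫ s in Set.Ioo (0:ℝ) v, (s:ℝ) ^ n = v ^ (n+1) / (n+1) := by
      rw [← integral_Ioc_eq_integral_Ioo, ← intervalIntegral.integral_of_le (le_of_lt hv)]
      rw [integral_pow]
      norm_num
    rw [h1, h2]
    rw [le_div_iff₀ (by positivity), Nat.factorial_succ]
    push_cast
    rw [div_div, div_mul_eq_mul_div, div_le_iff₀ (by positivity)]

lemma meas_c (n : ℕ) : Measurable fun s : ℝ => ENNReal.ofReal (s ^ n / n.factorial) :=
  ENNReal.measurable_ofReal.comp (Continuous.measurable (by continuity))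

lemma meas_k (t : ℝ) : Measurable fun w : ℝ => ENNReal.ofReal (Ee (w + t)) :=
  ENNReal.measurable_ofReal.comp ((Ee_cont.comp (by continuity)).measurable)

lemma Psi_step (n : ℕ) (t : ℝ) :
    ∫⁻ u in Set.Ioi (0:ℝ), Psi n (t + u) ≤ Psi (n+1) t := by
  set c : ℝ → ℝ≥0∞ := fun s => ENNReal.ofReal (s ^ n / n.factorial) with hc
  set k : ℝ → ℝ≥0∞ := fun w => ENNReal.ofReal (Ee (w + t)) with hk
  have hcm : Measurable c := meas_c n
  have hkm : Measurable k := meas_k t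
  have h1 : ∀ u : ℝ, Psi n (t + u) = ∫⁻ s in Set.Ioi (0:ℝ), c s * k (s + u) := by
    intro u
    rw [Psi]
    apply lintegral_congr
    intro s
    rw [hc, hk]
    congr 2
    ring
  calc ∫⁻ u in Set.Ioi (0:ℝ), Psi n (t + u)
      = ∫⁻ u in Set.Ioi (0:ℝ), ∫⁻ s in Set.Ioi (0:ℝ), c s * k (s + u) :=
        lintegral_congr h1
    _ = ∫⁻ s in Set.Ioi (0:ℝ), ∫⁻ u in Set.Ioi (0:ℝ), c s * k (s + u) := by
        apply lintegral_lintegral_swap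
        apply Measurable.aemeasurable
        refine Measurable.mul (f := fun p : ℝ × ℝ => c p.2) (g := fun p : ℝ × ℝ => k (p.2 + p.1)) ?_ ?_
        · exact hcm.comp measurable_snd
        · exact hkm.comp ((measurable_snd.add measurable_fst))
    _ = ∫⁻ s in Set.Ioi (0:ℝ), c s * ∫⁻ v in Set.Ioi s, k v := by
        apply lintegral_congr
        intro s
        have hint : Measurable fun u : ℝ => k (s + u) := hkm.comp ((continuous_const.add continuous_id).measurable)
        rw [lintegral_const_mul _ hint]
        congr 1
        have : ∀ u : ℝ, k (s + u) = k (u + s) := fun u => by rw [add_comm]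
        rw [lintegral_congr this]
        exact shift_Ioi k s
    _ = ∫⁻ s in Set.Ioi (0:ℝ), ∫⁻ v in Set.Ioi (0:ℝ), c s * (Set.Ioi s).indicator k v := by
        apply setLIntegral_congr_fun measurableSet_Ioi
        intro s hs
        beta_reduce
        rw [lintegral_const_mul _ (hkm.indicator measurableSet_Ioi)]
        congr 1
        rw [lintegral_indicator measurableSet_Ioi, Measure.restrict_restrict measurableSet_Ioi,
          Set.inter_eq_self_of_subset_left (Set.Ioi_subset_Ioi (le_of_lt hs))]
    _ = ∫⁻ v in Set.Ioi (0:ℝ), ∫⁻ s in Set.Ioi (0:ℝ), c s * (Set.Ioi s).indicator k v := by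
        apply lintegral_lintegral_swap
        apply Measurable.aemeasurable
        apply Measurable.mul
        · exact hcm.comp measurable_fst
        · have : Measurable fun p : ℝ × ℝ => (p.2, p.1) := measurable_snd.prodMk measurable_fst
          have hmeas : Measurable fun p : ℝ × ℝ => (Set.Ioi p.1).indicator k p.2 := by
            have : (fun p : ℝ × ℝ => (Set.Ioi p.1).indicator k p.2)
                = fun p : ℝ × ℝ => {q : ℝ × ℝ | q.1 < q.2}.indicator (fun q => k q.2) p := by
              funext p
              by_cases hp : p.1 < p.2
              · rw [Set.indicator_of_mem (Set.mem_Ioi.2 hp),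
                  Set.indicator_of_mem (show p ∈ {q : ℝ × ℝ | q.1 < q.2} from hp)]
              · rw [Set.indicator_of_notMem (by simpa using hp),
                  Set.indicator_of_notMem (by simpa using hp)]
            rw [this]
            exact (hkm.comp measurable_snd).indicator
              (measurableSet_lt measurable_fst measurable_snd)
          exact hmeas
    _ ≤ ∫⁻ v in Set.Ioi (0:ℝ), ENNReal.ofReal (v ^ (n+1) / (n+1).factorial) * k v := by
        apply setLIntegral_mono' measurableSet_Ioi
        intro v hv
        have heq : ∀ s : ℝ, c s * (Set.Ioi s).indicator k v
            = (Set.Iio v).indicator (fun s' => c s' * k v) s := by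
          intro s
          by_cases hsv : s < v
          · rw [Set.indicator_of_mem (Set.mem_Ioi.2 hsv), Set.indicator_of_mem (Set.mem_Iio.2 hsv)]
          · rw [Set.indicator_of_notMem (by simpa using hsv),
              Set.indicator_of_notMem (by simpa using hsv), mul_zero]
        rw [lintegral_congr heq, lintegral_indicator measurableSet_Iio,
          Measure.restrict_restrict measurableSet_Iio]
        have hIoo : Set.Iio v ∩ Set.Ioi (0:ℝ) = Set.Ioo 0 v := by
          rw [Set.inter_comm, Set.Ioi_inter_Iio]
        rw [hIoo, lintegral_mul_const' (k v) c ENNReal.ofReal_ne_top]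
        exact mul_le_mul_left (slice_bound n v) (k v)
    _ = Psi (n+1) t := rfl

lemma fEq (m : ℕ) : (fun x : ℝ => x ^ (m:ℝ) * Real.exp (-(1/2) * x ^ 2))
    = fun s : ℝ => s ^ m * Ee s := by
  funext x
  rw [Real.rpow_natCast]
  simp only [Ee]
  congr 1
  congr 1
  ring

def J (m : ℕ) : ℝ := ∫ s in Set.Ioi (0:ℝ), s ^ m * Ee s

lemma J_integrableOn (m : ℕ) :
    IntegrableOn (fun s : ℝ => s ^ m * Ee s) (Set.Ioi 0) := by
  have h := integrableOn_rpow_mul_exp_neg_mul_sq (b := 1/2) (by norm_num) (s := (m:ℝ))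
    (lt_of_lt_of_le neg_one_lt_zero (Nat.cast_nonneg m))
  rwa [fEq] at h

lemma tendsto_pow_Ee (m : ℕ) :
    Tendsto (fun s : ℝ => s ^ m * Ee s) atTop (nhds 0) := by
  have h := rpow_mul_exp_neg_mul_sq_isLittleO_exp_neg (b := 1/2) (by norm_num) (m:ℝ)
  rw [fEq] at h
  refine h.isBigO.trans_tendsto ?_
  have h2 : Tendsto (fun x : ℝ => -(1/2) * x) atTop atBot := by
    apply Filter.Tendsto.const_mul_atTop_of_neg (by norm_num) tendsto_id
  exact Real.tendsto_exp_atBot.comp h2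

lemma hasDeriv_Ee (s : ℝ) : HasDerivAt Ee (Ee s * (-s)) s := by
  have h1 : HasDerivAt (fun s : ℝ => -s ^ 2 / 2) (-s) s := by
    have h := ((hasDerivAt_pow 2 s).neg).div_const 2
    refine h.congr_deriv ?_
    push_cast
    ring
  have h2 := h1.exp
  exact h2

lemma J_one : J 1 = 1 := by
  have hderiv : ∀ s ∈ Set.Ioi (0:ℝ), HasDerivAt (fun s : ℝ => -Ee s) (s ^ 1 * Ee s) s := by
    intro s _
    have := (hasDeriv_Ee s).neg
    refine this.congr_deriv ?_
    ring
  have hcont : ContinuousWithinAt (fun s : ℝ => -Ee s) (Set.Ici 0) 0 := by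
    apply Continuous.continuousWithinAt
    exact (Real.continuous_exp.comp (by continuity)).neg
  have htends : Tendsto (fun s : ℝ => -Ee s) atTop (nhds 0) := by
    have := (tendsto_pow_Ee 0).neg
    simp only [pow_zero, one_mul, neg_zero] at this
    exact this
  have h := integral_Ioi_of_hasDerivAt_of_tendsto hcont hderiv (J_integrableOn 1) htends
  rw [J, h]
  simp [Ee]

lemma J_rec (m : ℕ) : J (m+2) = ((m:ℝ)+1) * J m := by
  have hderiv : ∀ s ∈ Set.Ioi (0:ℝ),
      HasDerivAt (fun s : ℝ => -(s ^ (m+1) * Ee s))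
        (s ^ (m+2) * Ee s - ((m:ℝ)+1) * (s ^ m * Ee s)) s := by
    intro s _
    have hp := hasDerivAt_pow (m+1) s
    have h := (hp.mul (hasDeriv_Ee s)).neg
    refine h.congr_deriv ?_
    have he : m + 1 - 1 = m := by omega
    rw [he]
    push_cast
    ring
  have hcont : ContinuousWithinAt (fun s : ℝ => -(s ^ (m+1) * Ee s)) (Set.Ici 0) 0 := by
    apply Continuous.continuousWithinAt
    exact ((continuous_pow (m+1)).mul (Real.continuous_exp.comp (by continuity))).neg
  have htends : Tendsto (fun s : ℝ => -(s ^ (m+1) * Ee s)) atTop (nhds 0) := by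
    have := (tendsto_pow_Ee (m+1)).neg
    simpa using this
  have hint : IntegrableOn
      (fun s : ℝ => s ^ (m+2) * Ee s - ((m:ℝ)+1) * (s ^ m * Ee s)) (Set.Ioi 0) :=
    (J_integrableOn (m+2)).sub ((J_integrableOn m).const_mul _)
  have h := integral_Ioi_of_hasDerivAt_of_tendsto hcont hderiv hint htends
  rw [integral_sub (J_integrableOn (m+2)) ((J_integrableOn m).const_mul _),
    integral_const_mul] at h
  have h0 : -((0:ℝ) ^ (m+1) * Ee 0) = 0 := by simp
  rw [h0] at h
  have : J (m+2) - ((m:ℝ)+1) * J m = 0 := by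
    rw [J, J]; linarith [h]
  linarith [this]

lemma J_zero_le : J 0 ≤ 2 := by
  have hmono : ∀ s ∈ Set.Ioi (0:ℝ), s ^ 0 * Ee s ≤ Real.exp (1/2) * Real.exp (-(1:ℝ) * s) := by
    intro s _
    rw [pow_zero, one_mul, Ee, ← Real.exp_add]
    apply Real.exp_le_exp.2
    nlinarith [sq_nonneg (s - 1)]
  have hint2 : IntegrableOn (fun s : ℝ => Real.exp (1/2) * Real.exp (-(1:ℝ) * s))
      (Set.Ioi 0) := (exp_neg_integrableOn_Ioi 0 one_pos).const_mul _
  have h1 : J 0 ≤ ∫ s in Set.Ioi (0:ℝ), Real.exp (1/2) * Real.exp (-(1:ℝ) * s) :=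
    setIntegral_mono_on (J_integrableOn 0) hint2 measurableSet_Ioi hmono
  have h2 : ∫ s in Set.Ioi (0:ℝ), Real.exp (1/2) * Real.exp (-(1:ℝ) * s)
      = Real.exp (1/2) * ∫ s in Set.Ioi (0:ℝ), Real.exp (-(1:ℝ) * s) :=
    integral_const_mul _ _
  have h3 : ∫ s in Set.Ioi (0:ℝ), Real.exp (-(1:ℝ) * s) = 1 := by
    have := integral_exp_neg_Ioi (0:ℝ)
    simpa using this
  have h4 : Real.exp (1/2) < 2 := by
    have he : Real.exp (1/2) * Real.exp (1/2) = Real.exp 1 := by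
      rw [← Real.exp_add]; norm_num
    nlinarith [Real.exp_one_lt_d9, Real.exp_pos (1/2)]
  rw [h2, h3] at h1
  linarith

lemma J_le : ∀ m : ℕ, J m ≤ 2 * (Nat.doubleFactorial (m-1) : ℝ)
  | 0 => by simpa [Nat.doubleFactorial] using J_zero_le
  | 1 => by rw [J_one]; simp [Nat.doubleFactorial]
  | (m+2) => by
    have ih := J_le m
    have hrec := J_rec m
    have hd : Nat.doubleFactorial (m+2-1) = (m+1) * Nat.doubleFactorial (m-1) := Nat.doubleFactorial_add_one m
    rw [hrec]
    have h1 : ((m:ℝ)+1) * J m ≤ ((m:ℝ)+1) * (2 * (Nat.doubleFactorial (m-1) : ℝ)) :=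
      mul_le_mul_of_nonneg_left ih (by positivity)
    rw [hd]
    push_cast
    nlinarith [h1]


lemma G_le_Psi (n : ℕ) : ∀ t : ℝ, G (n+1) t ≤ Psi n t := by
  induction n with
  | zero =>
    intro t
    rw [G_succ]
    calc ∫⁻ u in Set.Icc (0:ℝ) 1, G 0 (t+u)
        = ∫⁻ u in Set.Icc (0:ℝ) 1, ENNReal.ofReal (Ee (t+u)) :=
          lintegral_congr fun u => G_zero (t+u)
      _ = ∫⁻ u in Set.Ioc (0:ℝ) 1, ENNReal.ofReal (Ee (t+u)) := by
          rw [← Measure.restrict_congr_set Ioc_ae_eq_Icc]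
      _ ≤ ∫⁻ u in Set.Ioi (0:ℝ), ENNReal.ofReal (Ee (t+u)) :=
          lintegral_mono_set Set.Ioc_subset_Ioi_self
      _ = Psi 0 t := by
          rw [Psi]
          apply lintegral_congr
          intro s
          rw [pow_zero, Nat.factorial_zero]
          norm_num
          rw [add_comm]
  | succ n ih =>
    intro t
    rw [G_succ]
    calc ∫⁻ u in Set.Icc (0:ℝ) 1, G (n+1) (t+u)
        ≤ ∫⁻ u in Set.Icc (0:ℝ) 1, Psi n (t+u) := lintegral_mono fun u => ih (t+u)
      _ = ∫⁻ u in Set.Ioc (0:ℝ) 1, Psi n (t+u) := by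
          rw [← Measure.restrict_congr_set Ioc_ae_eq_Icc]
      _ ≤ ∫⁻ u in Set.Ioi (0:ℝ), Psi n (t+u) := lintegral_mono_set Set.Ioc_subset_Ioi_self
      _ ≤ Psi (n+1) t := Psi_step n t

lemma Psi_zero_eval (m : ℕ) : Psi m 0 = ENNReal.ofReal (J m / m.factorial) := by
  rw [Psi]
  have h1 : ∫⁻ s in Set.Ioi (0:ℝ),
        ENNReal.ofReal (s ^ m / m.factorial) * ENNReal.ofReal (Ee (s + 0))
      = ∫⁻ s in Set.Ioi (0:ℝ), ENNReal.ofReal (s ^ m * Ee s / m.factorial) := by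
    apply setLIntegral_congr_fun measurableSet_Ioi
    intro s hs
    beta_reduce
    have h0 : (0:ℝ) < s := hs
    rw [add_zero, ← ENNReal.ofReal_mul (by positivity)]
    congr 1
    ring
  rw [h1]
  have hInt : IntegrableOn (fun s : ℝ => s ^ m * Ee s / m.factorial) (Set.Ioi 0) :=
    (J_integrableOn m).div_const _
  have hnn : 0 ≤ᵐ[volume.restrict (Set.Ioi (0:ℝ))] fun s : ℝ => s ^ m * Ee s / m.factorial := by
    refine (ae_restrict_iff' measurableSet_Ioi).2 (Filter.Eventually.of_forall ?_)
    intro s hs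
    have h0 : (0:ℝ) ≤ s := le_of_lt hs
    have := (Ee_pos s).le
    positivity
  rw [← ofReal_integral_eq_lintegral_ofReal hInt hnn]
  congr 1
  rw [integral_div]
  rfl

lemma fac_dfac (m : ℕ) :
    (m.factorial : ℝ) = (Nat.doubleFactorial m : ℝ) * (Nat.doubleFactorial (m-1) : ℝ) := by
  cases m with
  | zero => norm_num [Nat.doubleFactorial]
  | succ k =>
    have h := Nat.factorial_eq_mul_doubleFactorial k
    have h2 : k + 1 - 1 = k := by omega
    rw [h2]
    exact_mod_cast congrArg (Nat.cast (R := ℝ)) h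

/-- `∫_{[0,1]^n} ∏_{a<b} (1 - x_a x_b) dx = O(1/(n-1)‼)`. -/
theorem integral_prod_pairs_le :
    ∃ C : ℝ, 0 < C ∧ ∀ n : ℕ, 0 < n →
      (∫ x in (Set.univ.pi fun _ : Fin n => Set.Icc (0:ℝ) 1),
        ∏ p ∈ Finset.univ.filter (fun p : Fin n × Fin n => p.1 < p.2),
          (1 - x p.1 * x p.2))
      ≤ C / (Nat.doubleFactorial (n - 1) : ℝ) := by
  refine ⟨2 * Real.exp (9/16), by positivity, ?_⟩
  intro n hn
  obtain ⟨m, rfl⟩ : ∃ m, n = m + 1 := ⟨n - 1, (Nat.succ_pred_eq_of_pos hn).symm⟩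
  have hset : (Set.univ.pi fun _ : Fin (m+1) => Set.Icc (0:ℝ) 1) = piIcc (m+1) := rfl
  rw [hset]
  have hSm : MeasurableSet (piIcc (m+1)) := piIcc_meas (m+1)
  have hScpt : IsCompact (piIcc (m+1)) := isCompact_univ_pi fun _ => isCompact_Icc
  have hsum_cont : Continuous fun x : Fin (m+1) → ℝ => ∑ i, x i := by
    apply continuous_finset_sum
    intro i _
    exact continuous_apply i
  set P : (Fin (m+1) → ℝ) → ℝ := fun x =>
    ∏ p ∈ Finset.univ.filter (fun p : Fin (m+1) × Fin (m+1) => p.1 < p.2),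
      (1 - x p.1 * x p.2) with hP
  have hPcont : Continuous P := by
    apply continuous_finset_prod
    intro p _
    exact continuous_const.sub ((continuous_apply p.1).mul (continuous_apply p.2))
  have hQcont : Continuous fun x : Fin (m+1) → ℝ => Real.exp (9/16) * Ee (∑ i, x i) :=
    continuous_const.mul (Ee_cont.comp hsum_cont)
  have hint1 : IntegrableOn P (piIcc (m+1)) :=
    hPcont.continuousOn.integrableOn_compact hScpt
  have hint2 : IntegrableOn (fun x : Fin (m+1) → ℝ => Real.exp (9/16) * Ee (∑ i, x i))
      (piIcc (m+1)) := hQcont.continuousOn.integrableOn_compact hScpt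
  have hint3 : IntegrableOn (fun x : Fin (m+1) → ℝ => Ee (∑ i, x i)) (piIcc (m+1)) :=
    (Ee_cont.comp hsum_cont).continuousOn.integrableOn_compact hScpt
  have hmono : ∀ x ∈ piIcc (m+1), P x ≤ Real.exp (9/16) * Ee (∑ i, x i) := by
    intro x hx
    exact aux_pointwise x hx
  have h1 : ∫ x in piIcc (m+1), P x
      ≤ ∫ x in piIcc (m+1), Real.exp (9/16) * Ee (∑ i, x i) :=
    setIntegral_mono_on hint1 hint2 hSm hmono
  rw [integral_const_mul] at h1
  set In : ℝ := ∫ x in piIcc (m+1), Ee (∑ i, x i) with hIn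
  have hInn : 0 ≤ In := setIntegral_nonneg hSm fun x _ => (Ee_pos _).le
  have hIe : ENNReal.ofReal In = G (m+1) 0 := by
    rw [G, hIn]
    rw [ofReal_integral_eq_lintegral_ofReal hint3
      ((ae_restrict_iff' hSm).2 (Filter.Eventually.of_forall fun x _ => (Ee_pos _).le))]
    apply lintegral_congr
    intro x
    rw [zero_add]
  have hbound : ENNReal.ofReal In ≤ ENNReal.ofReal (2 / (Nat.doubleFactorial m : ℝ)) := by
    rw [hIe]
    refine (G_le_Psi m 0).trans ?_
    rw [Psi_zero_eval]
    apply ENNReal.ofReal_le_ofReal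
    have hfac := fac_dfac m
    have hdf_pos : (0:ℝ) < (Nat.doubleFactorial m : ℝ) := by
      exact_mod_cast Nat.doubleFactorial_pos m
    have hdf1_pos : (0:ℝ) < (Nat.doubleFactorial (m-1) : ℝ) := by
      exact_mod_cast Nat.doubleFactorial_pos (m-1)
    have hfacpos : (0:ℝ) < (m.factorial : ℝ) := by
      exact_mod_cast Nat.factorial_pos m
    rw [div_le_div_iff₀ hfacpos hdf_pos]
    calc J m * (Nat.doubleFactorial m : ℝ)
        ≤ (2 * (Nat.doubleFactorial (m-1) : ℝ)) * (Nat.doubleFactorial m : ℝ) :=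
          mul_le_mul_of_nonneg_right (J_le m) hdf_pos.le
      _ = 2 * (m.factorial : ℝ) := by rw [hfac]; ring
  have hIn_le : In ≤ 2 / (Nat.doubleFactorial m : ℝ) := by
    have hpos : (0:ℝ) ≤ 2 / (Nat.doubleFactorial m : ℝ) := by positivity
    exact (ENNReal.ofReal_le_ofReal_iff hpos).1 hbound
  have hds : (m + 1 - 1) = m := by omega
  rw [hds]
  calc ∫ x in piIcc (m+1), P x ≤ Real.exp (9/16) * In := h1
    _ ≤ Real.exp (9/16) * (2 / (Nat.doubleFactorial m : ℝ)) :=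
        mul_le_mul_of_nonneg_left hIn_le (Real.exp_nonneg _)
    _ = 2 * Real.exp (9/16) / (Nat.doubleFactorial m : ℝ) := by ring
end
end

section
/- In the random two-sided matching model with n men and n women with independent uniformly random preference lists, the probability P(M) that a fixed perfect matching M is exchange-stable equals (∫_{[0,1]^n} ∏_{1 ≤ a < b ≤ n}(1 − x_a x_b) dx)², independently of M. -/
open MeasureTheory

/-- Sample space of the two-sided model: a pair of `n × n` matrices of preference variables
(`X` for the men, `Y` for the women), with the product uniform measure on `[0,1]^{n×n} × [0,1]^{n×n}`. -/
noncomputable def mu2 (n : ℕ) :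
    Measure ((Fin n × Fin n → ℝ) × (Fin n × Fin n → ℝ)) :=
  (volume.restrict (Set.univ.pi fun _ : Fin n × Fin n => Set.Icc (0:ℝ) 1)).prod
    (volume.restrict (Set.univ.pi fun _ : Fin n × Fin n => Set.Icc (0:ℝ) 1))

/-- `M` is exchange-stable for the preference variables `ω = (X, Y)`: no two men prefer each
other's partners, and no two women prefer each other's partners. -/
def eStable2 {n : ℕ} (M : Equiv.Perm (Fin n))
    (ω : (Fin n × Fin n → ℝ) × (Fin n × Fin n → ℝ)) : Prop :=
  (∀ i₁ i₂ : Fin n, i₁ ≠ i₂ →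
    ¬ (ω.1 (i₁, M i₂) < ω.1 (i₁, M i₁) ∧ ω.1 (i₂, M i₁) < ω.1 (i₂, M i₂))) ∧
  (∀ j₁ j₂ : Fin n, j₁ ≠ j₂ →
    ¬ (ω.2 (M.symm j₂, j₁) < ω.2 (M.symm j₁, j₁) ∧ ω.2 (M.symm j₁, j₂) < ω.2 (M.symm j₂, j₂)))


open MeasureTheory Set

noncomputable def mUnif : Measure ℝ := volume.restrict (Set.Icc (0:ℝ) 1)

instance : IsProbabilityMeasure mUnif :=
  ⟨by simp [mUnif, Real.volume_Icc]⟩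

lemma restrict_cube_eq (ι : Type*) [Fintype ι] :
    volume.restrict (Set.univ.pi fun _ : ι => Set.Icc (0:ℝ) 1)
      = Measure.pi (fun _ : ι => mUnif) := by
  refine (Measure.pi_eq (μ := fun _ : ι => mUnif) fun s hs => ?_).symm
  rw [Measure.restrict_apply (MeasurableSet.univ_pi hs), ← Set.pi_inter_distrib, volume_pi_pi]
  simp_rw [mUnif, Measure.restrict_apply (hs _)]

lemma mUnif_Iio {a : ℝ} (h0 : 0 ≤ a) (h1 : a ≤ 1) :
    mUnif (Set.Iio a) = ENNReal.ofReal a := by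
  rw [mUnif, Measure.restrict_apply measurableSet_Iio]
  have : Set.Iio a ∩ Set.Icc 0 1 = Set.Ico 0 a := by
    ext t
    constructor
    · rintro ⟨ht, h0t, h1t⟩; exact ⟨h0t, ht⟩
    · rintro ⟨h0t, hta⟩; exact ⟨hta, h0t, hta.le.trans h1⟩
  rw [this, Real.volume_Ico, sub_zero]

lemma prod_notlt {a b : ℝ} (ha : a ∈ Set.Icc (0:ℝ) 1) (hb : b ∈ Set.Icc (0:ℝ) 1) :
    (mUnif.prod mUnif) {c : ℝ × ℝ | ¬ (c.1 < a ∧ c.2 < b)} = ENNReal.ofReal (1 - a * b) := by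
  have hset : {c : ℝ × ℝ | ¬ (c.1 < a ∧ c.2 < b)} = (Set.Iio a ×ˢ Set.Iio b)ᶜ := by
    ext c; simp [Set.mem_prod]
  have hmeas : MeasurableSet (Set.Iio a ×ˢ Set.Iio b) :=
    measurableSet_Iio.prod measurableSet_Iio
  rw [hset, measure_compl hmeas (measure_ne_top _ _), measure_univ, Measure.prod_prod,
    mUnif_Iio ha.1 ha.2, mUnif_Iio hb.1 hb.2, ← ENNReal.ofReal_mul ha.1]
  rw [← ENNReal.ofReal_one, ← ENNReal.ofReal_sub _ (mul_nonneg ha.1 hb.1)]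

abbrev UPair (n : ℕ) := {q : Fin n × Fin n // q.1 < q.2}

lemma inner_meas {n : ℕ} (x : Fin n → ℝ) (hx : ∀ i, x i ∈ Set.Icc (0:ℝ) 1) :
    ((Measure.pi fun _ : UPair n => mUnif).prod (Measure.pi fun _ : UPair n => mUnif))
      {p : (UPair n → ℝ) × (UPair n → ℝ) |
        ∀ q : UPair n, ¬ (p.1 q < x q.1.1 ∧ p.2 q < x q.1.2)}
      = ∏ q : UPair n, ENNReal.ofReal (1 - x q.1.1 * x q.1.2) := by
  have hmeas : MeasurableSet {p : (UPair n → ℝ) × (UPair n → ℝ) |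
      ∀ q : UPair n, ¬ (p.1 q < x q.1.1 ∧ p.2 q < x q.1.2)} := by
    have : {p : (UPair n → ℝ) × (UPair n → ℝ) |
        ∀ q : UPair n, ¬ (p.1 q < x q.1.1 ∧ p.2 q < x q.1.2)}
        = ⋂ q : UPair n, {p : (UPair n → ℝ) × (UPair n → ℝ) |
            p.1 q < x q.1.1 ∧ p.2 q < x q.1.2}ᶜ := by
      ext p; simp [Set.mem_iInter]
    rw [this]
    exact MeasurableSet.iInter fun q =>
      ((measurableSet_lt ((measurable_pi_apply q).comp measurable_fst) measurable_const).inter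
        (measurableSet_lt ((measurable_pi_apply q).comp measurable_snd) measurable_const)).compl
  have mp := measurePreserving_arrowProdEquivProdArrow ℝ ℝ (UPair n)
    (fun _ => mUnif) (fun _ => mUnif)
  rw [← mp.measure_preimage hmeas.nullMeasurableSet]
  have hpre : (MeasurableEquiv.arrowProdEquivProdArrow ℝ ℝ (UPair n)) ⁻¹'
      {p : (UPair n → ℝ) × (UPair n → ℝ) |
        ∀ q : UPair n, ¬ (p.1 q < x q.1.1 ∧ p.2 q < x q.1.2)}
      = Set.univ.pi (fun q : UPair n => {c : ℝ × ℝ | ¬ (c.1 < x q.1.1 ∧ c.2 < x q.1.2)}) := by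
    ext w
    simp [MeasurableEquiv.arrowProdEquivProdArrow, Equiv.arrowProdEquivProdArrow, Set.mem_pi]
  rw [hpre, Measure.pi_pi]
  exact Finset.prod_congr rfl fun q _ => prod_notlt (hx _) (hx _)

lemma measure_pairSet {n : ℕ} (e : (Fin n ⊕ (UPair n ⊕ UPair n)) ≃ (Fin n × Fin n)) :
    (Measure.pi fun _ : Fin n × Fin n => mUnif)
      {X : Fin n × Fin n → ℝ | ∀ q : UPair n,
        ¬ (X (e (.inr (.inl q))) < X (e (.inl q.1.1)) ∧
           X (e (.inr (.inr q))) < X (e (.inl q.1.2)))}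
      = ENNReal.ofReal (∫ x in (Set.univ.pi fun _ : Fin n => Set.Icc (0:ℝ) 1),
          ∏ p ∈ Finset.univ.filter (fun p : Fin n × Fin n => p.1 < p.2), (1 - x p.1 * x p.2)) := by
  classical
  set πD := Measure.pi fun _ : Fin n => mUnif with hπD
  set πS := Measure.pi fun _ : UPair n => mUnif with hπS
  set Φ : (Fin n → ℝ) × ((UPair n → ℝ) × (UPair n → ℝ)) → (Fin n × Fin n → ℝ) :=
    (MeasurableEquiv.piCongrLeft (fun _ : Fin n × Fin n => ℝ) e) ∘
      (MeasurableEquiv.sumPiEquivProdPi (fun _ : Fin n ⊕ (UPair n ⊕ UPair n) => ℝ)).symm ∘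
        (Prod.map id (MeasurableEquiv.sumPiEquivProdPi (fun _ : UPair n ⊕ UPair n => ℝ)).symm)
    with hΦ
  have mp : MeasurePreserving Φ (πD.prod (πS.prod πS))
      (Measure.pi fun _ : Fin n × Fin n => mUnif) :=
    ((measurePreserving_piCongrLeft (fun _ : Fin n × Fin n => mUnif) e).comp
      ((measurePreserving_sumPiEquivProdPi_symm
          (fun _ : Fin n ⊕ (UPair n ⊕ UPair n) => mUnif)).comp
        ((MeasurePreserving.id πD).prod
          (measurePreserving_sumPiEquivProdPi_symm (fun _ : UPair n ⊕ UPair n => mUnif)))))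
  have keyD : ∀ y : (Fin n → ℝ) × ((UPair n → ℝ) × (UPair n → ℝ)), ∀ i : Fin n,
      Φ y (e (Sum.inl i)) = y.1 i := by
    intro y i
    simp [hΦ, MeasurableEquiv.piCongrLeft_apply_apply,
      MeasurableEquiv.coe_sumPiEquivProdPi_symm, Equiv.sumPiEquivProdPi_symm_apply]
  have keyU : ∀ y : (Fin n → ℝ) × ((UPair n → ℝ) × (UPair n → ℝ)), ∀ q : UPair n,
      Φ y (e (Sum.inr (Sum.inl q))) = y.2.1 q := by
    intro y q
    simp [hΦ, MeasurableEquiv.piCongrLeft_apply_apply,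
      MeasurableEquiv.coe_sumPiEquivProdPi_symm, Equiv.sumPiEquivProdPi_symm_apply]
  have keyV : ∀ y : (Fin n → ℝ) × ((UPair n → ℝ) × (UPair n → ℝ)), ∀ q : UPair n,
      Φ y (e (Sum.inr (Sum.inr q))) = y.2.2 q := by
    intro y q
    simp [hΦ, MeasurableEquiv.piCongrLeft_apply_apply,
      MeasurableEquiv.coe_sumPiEquivProdPi_symm, Equiv.sumPiEquivProdPi_symm_apply]
  have hA : MeasurableSet {X : Fin n × Fin n → ℝ | ∀ q : UPair n,
      ¬ (X (e (.inr (.inl q))) < X (e (.inl q.1.1)) ∧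
         X (e (.inr (.inr q))) < X (e (.inl q.1.2)))} := by
    have : {X : Fin n × Fin n → ℝ | ∀ q : UPair n,
        ¬ (X (e (.inr (.inl q))) < X (e (.inl q.1.1)) ∧
           X (e (.inr (.inr q))) < X (e (.inl q.1.2)))}
        = ⋂ q : UPair n, ({X : Fin n × Fin n → ℝ |
            X (e (.inr (.inl q))) < X (e (.inl q.1.1))} ∩
           {X : Fin n × Fin n → ℝ |
            X (e (.inr (.inr q))) < X (e (.inl q.1.2))})ᶜ := by
      ext X; simp [Set.mem_iInter]
    rw [this]
    refine MeasurableSet.iInter fun q => MeasurableSet.compl (MeasurableSet.inter ?_ ?_)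
    · exact measurableSet_lt (measurable_pi_apply _) (measurable_pi_apply _)
    · exact measurableSet_lt (measurable_pi_apply _) (measurable_pi_apply _)
  rw [← mp.measure_preimage hA.nullMeasurableSet]
  have hpre : Φ ⁻¹' {X : Fin n × Fin n → ℝ | ∀ q : UPair n,
      ¬ (X (e (.inr (.inl q))) < X (e (.inl q.1.1)) ∧
         X (e (.inr (.inr q))) < X (e (.inl q.1.2)))}
      = {y : (Fin n → ℝ) × ((UPair n → ℝ) × (UPair n → ℝ)) | ∀ q : UPair n,
          ¬ (y.2.1 q < y.1 q.1.1 ∧ y.2.2 q < y.1 q.1.2)} := by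
    ext y
    simp only [Set.mem_preimage, Set.mem_setOf_eq, keyD, keyU, keyV]
  rw [hpre]
  have hT : MeasurableSet {y : (Fin n → ℝ) × ((UPair n → ℝ) × (UPair n → ℝ)) | ∀ q : UPair n,
      ¬ (y.2.1 q < y.1 q.1.1 ∧ y.2.2 q < y.1 q.1.2)} := by
    have : {y : (Fin n → ℝ) × ((UPair n → ℝ) × (UPair n → ℝ)) | ∀ q : UPair n,
        ¬ (y.2.1 q < y.1 q.1.1 ∧ y.2.2 q < y.1 q.1.2)}
        = ⋂ q : UPair n, ({y : (Fin n → ℝ) × ((UPair n → ℝ) × (UPair n → ℝ)) |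
            y.2.1 q < y.1 q.1.1} ∩ {y : (Fin n → ℝ) × ((UPair n → ℝ) × (UPair n → ℝ)) |
            y.2.2 q < y.1 q.1.2})ᶜ := by
      ext y; simp [Set.mem_iInter]
    rw [this]
    refine MeasurableSet.iInter fun q => MeasurableSet.compl (MeasurableSet.inter ?_ ?_)
    · exact measurableSet_lt measurable_snd.fst.eval measurable_fst.eval
    · exact measurableSet_lt measurable_snd.snd.eval measurable_fst.eval
  rw [Measure.prod_apply hT]
  rw [hπD, ← restrict_cube_eq (Fin n)]
  have hcube : MeasurableSet (Set.univ.pi fun _ : Fin n => Set.Icc (0:ℝ) 1) :=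
    MeasurableSet.univ_pi fun _ => measurableSet_Icc
  rw [setLIntegral_congr_fun hcube (fun x hx => ?_)]
  · -- final conversion to Bochner integral
    have hcompact : IsCompact (Set.univ.pi fun _ : Fin n => Set.Icc (0:ℝ) 1) :=
      isCompact_univ_pi fun _ => isCompact_Icc
    have hcont : Continuous fun x : Fin n → ℝ =>
        ∏ p ∈ Finset.univ.filter (fun p : Fin n × Fin n => p.1 < p.2), (1 - x p.1 * x p.2) :=
      continuous_finset_prod _ fun p _ =>
        continuous_const.sub ((continuous_apply p.1).mul (continuous_apply p.2))
    have hInt : IntegrableOn (fun x : Fin n → ℝ =>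
        ∏ p ∈ Finset.univ.filter (fun p : Fin n × Fin n => p.1 < p.2), (1 - x p.1 * x p.2))
        (Set.univ.pi fun _ : Fin n => Set.Icc (0:ℝ) 1) volume :=
      hcont.continuousOn.integrableOn_compact hcompact
    have hnn : 0 ≤ᵐ[volume.restrict (Set.univ.pi fun _ : Fin n => Set.Icc (0:ℝ) 1)]
        (fun x : Fin n → ℝ =>
          ∏ p ∈ Finset.univ.filter (fun p : Fin n × Fin n => p.1 < p.2), (1 - x p.1 * x p.2)) := by
      refine (ae_restrict_iff' hcube).mpr (Filter.Eventually.of_forall fun x hx => ?_)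
      have hx' : ∀ i, x i ∈ Set.Icc (0:ℝ) 1 := fun i => hx i (Set.mem_univ i)
      refine Finset.prod_nonneg fun p _ => ?_
      have : x p.1 * x p.2 ≤ 1 :=
        mul_le_one₀ (hx' p.1).2 (hx' p.2).1 (hx' p.2).2
      linarith
    rw [← ofReal_integral_eq_lintegral_ofReal hInt hnn]
  · -- pointwise identification on the cube
    have hx' : ∀ i, x i ∈ Set.Icc (0:ℝ) 1 := fun i => hx i (Set.mem_univ i)
    have : (Prod.mk x ⁻¹' {y : (Fin n → ℝ) × ((UPair n → ℝ) × (UPair n → ℝ)) | ∀ q : UPair n,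
        ¬ (y.2.1 q < y.1 q.1.1 ∧ y.2.2 q < y.1 q.1.2)})
        = {p : (UPair n → ℝ) × (UPair n → ℝ) |
            ∀ q : UPair n, ¬ (p.1 q < x q.1.1 ∧ p.2 q < x q.1.2)} := rfl
    rw [this, inner_meas x hx']
    rw [← ENNReal.ofReal_prod_of_nonneg]
    · congr 1
      exact (Finset.prod_subtype (p := fun q : Fin n × Fin n => q.1 < q.2)
        (Finset.univ.filter (fun p : Fin n × Fin n => p.1 < p.2))
        (by intro p; simp) (fun p => (1 - x p.1 * x p.2))).symm
    · intro q _
      have : x q.1.1 * x q.1.2 ≤ 1 :=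
        mul_le_one₀ (hx' q.1.1).2 (hx' q.1.2).1 (hx' q.1.2).2
      linarith

noncomputable def pairEquiv (n : ℕ) : (Fin n ⊕ (UPair n ⊕ UPair n)) ≃ (Fin n × Fin n) where
  toFun := Sum.elim (fun i => (i, i))
    (Sum.elim (fun q : UPair n => q.1) (fun q : UPair n => (q.1.2, q.1.1)))
  invFun p :=
    if h : p.1 = p.2 then .inl p.1
    else if h' : p.1 < p.2 then .inr (.inl ⟨p, h'⟩)
    else .inr (.inr ⟨(p.2, p.1), lt_of_le_of_ne (not_lt.mp h') (fun hh => h hh.symm)⟩)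
  left_inv := by
    rintro (i | (⟨⟨a, b⟩, hab⟩ | ⟨⟨a, b⟩, hab⟩))
    · simp
    · simp only [Sum.elim_inl, Sum.elim_inr]
      exact (dif_neg (ne_of_lt hab)).trans (dif_pos hab)
    · simp only [Sum.elim_inl, Sum.elim_inr]
      exact (dif_neg (ne_of_gt hab)).trans (dif_neg (lt_asymm hab))
  right_inv := by
    rintro ⟨i, j⟩
    by_cases h : i = j
    · subst h; simp
    · by_cases h' : i < j
      · simp only [dif_neg h, dif_pos h', Sum.elim_inr, Sum.elim_inl]
      · simp only [dif_neg h, dif_neg h', Sum.elim_inr, Sum.elim_inl]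

theorem prob_eStable2_eq' (n : ℕ) (M : Equiv.Perm (Fin n)) :
    (((volume.restrict (Set.univ.pi fun _ : Fin n × Fin n => Set.Icc (0:ℝ) 1)).prod
    (volume.restrict (Set.univ.pi fun _ : Fin n × Fin n => Set.Icc (0:ℝ) 1)))
      {ω : (Fin n × Fin n → ℝ) × (Fin n × Fin n → ℝ) |
        (∀ i₁ i₂ : Fin n, i₁ ≠ i₂ →
          ¬ (ω.1 (i₁, M i₂) < ω.1 (i₁, M i₁) ∧ ω.1 (i₂, M i₁) < ω.1 (i₂, M i₂))) ∧
        (∀ j₁ j₂ : Fin n, j₁ ≠ j₂ →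
          ¬ (ω.2 (M.symm j₂, j₁) < ω.2 (M.symm j₁, j₁) ∧
             ω.2 (M.symm j₁, j₂) < ω.2 (M.symm j₂, j₂)))}).toReal
      = (∫ x in (Set.univ.pi fun _ : Fin n => Set.Icc (0:ℝ) 1),
          ∏ p ∈ Finset.univ.filter (fun p : Fin n × Fin n => p.1 < p.2),
            (1 - x p.1 * x p.2)) ^ 2 := by
  classical
  obtain ⟨I, hI⟩ : ∃ I : ℝ, I = ∫ x in (Set.univ.pi fun _ : Fin n => Set.Icc (0:ℝ) 1),
      ∏ p ∈ Finset.univ.filter (fun p : Fin n × Fin n => p.1 < p.2), (1 - x p.1 * x p.2) :=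
    ⟨_, rfl⟩
  rw [← hI]
  have hI0 : 0 ≤ I := by
    rw [hI]
    refine setIntegral_nonneg (MeasurableSet.univ_pi fun _ => measurableSet_Icc) fun x hx => ?_
    have hx' : ∀ i, x i ∈ Set.Icc (0:ℝ) 1 := fun i => hx i (Set.mem_univ i)
    refine Finset.prod_nonneg fun p _ => ?_
    have : x p.1 * x p.2 ≤ 1 := mul_le_one₀ (hx' p.1).2 (hx' p.2).1 (hx' p.2).2
    linarith
  set eA : (Fin n ⊕ (UPair n ⊕ UPair n)) ≃ (Fin n × Fin n) :=
    (pairEquiv n).trans (Equiv.prodCongr (Equiv.refl (Fin n)) M) with heA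
  set eB : (Fin n ⊕ (UPair n ⊕ UPair n)) ≃ (Fin n × Fin n) :=
    (pairEquiv n).trans ((Equiv.prodComm (Fin n) (Fin n)).trans
      (Equiv.prodCongr M.symm (Equiv.refl (Fin n)))) with heB
  have hAset : {X : Fin n × Fin n → ℝ | ∀ i₁ i₂ : Fin n, i₁ ≠ i₂ →
      ¬ (X (i₁, M i₂) < X (i₁, M i₁) ∧ X (i₂, M i₁) < X (i₂, M i₂))}
      = {X : Fin n × Fin n → ℝ | ∀ q : UPair n,
          ¬ (X (eA (.inr (.inl q))) < X (eA (.inl q.1.1)) ∧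
             X (eA (.inr (.inr q))) < X (eA (.inl q.1.2)))} := by
    ext X
    simp only [Set.mem_setOf_eq]
    constructor
    · intro h q
      exact h q.1.1 q.1.2 (ne_of_lt q.2)
    · intro h i₁ i₂ hne
      rcases lt_or_gt_of_ne hne with hlt | hgt
      · exact h ⟨(i₁, i₂), hlt⟩
      · have := h ⟨(i₂, i₁), hgt⟩; tauto
  have hBset : {Y : Fin n × Fin n → ℝ | ∀ j₁ j₂ : Fin n, j₁ ≠ j₂ →
      ¬ (Y (M.symm j₂, j₁) < Y (M.symm j₁, j₁) ∧ Y (M.symm j₁, j₂) < Y (M.symm j₂, j₂))}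
      = {Y : Fin n × Fin n → ℝ | ∀ q : UPair n,
          ¬ (Y (eB (.inr (.inl q))) < Y (eB (.inl q.1.1)) ∧
             Y (eB (.inr (.inr q))) < Y (eB (.inl q.1.2)))} := by
    ext Y
    simp only [Set.mem_setOf_eq]
    constructor
    · intro h q
      exact h q.1.1 q.1.2 (ne_of_lt q.2)
    · intro h j₁ j₂ hne
      rcases lt_or_gt_of_ne hne with hlt | hgt
      · exact h ⟨(j₁, j₂), hlt⟩
      · have := h ⟨(j₂, j₁), hgt⟩; tauto
  have h1 : (volume.restrict (Set.univ.pi fun _ : Fin n × Fin n => Set.Icc (0:ℝ) 1))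
      {X : Fin n × Fin n → ℝ | ∀ i₁ i₂ : Fin n, i₁ ≠ i₂ →
        ¬ (X (i₁, M i₂) < X (i₁, M i₁) ∧ X (i₂, M i₁) < X (i₂, M i₂))}
      = ENNReal.ofReal I := by
    rw [restrict_cube_eq, hAset, hI]; exact measure_pairSet eA
  have h2 : (volume.restrict (Set.univ.pi fun _ : Fin n × Fin n => Set.Icc (0:ℝ) 1))
      {Y : Fin n × Fin n → ℝ | ∀ j₁ j₂ : Fin n, j₁ ≠ j₂ →
        ¬ (Y (M.symm j₂, j₁) < Y (M.symm j₁, j₁) ∧ Y (M.symm j₁, j₂) < Y (M.symm j₂, j₂))}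
      = ENNReal.ofReal I := by
    rw [restrict_cube_eq, hBset, hI]; exact measure_pairSet eB
  have hsplit : {ω : (Fin n × Fin n → ℝ) × (Fin n × Fin n → ℝ) |
      (∀ i₁ i₂ : Fin n, i₁ ≠ i₂ →
        ¬ (ω.1 (i₁, M i₂) < ω.1 (i₁, M i₁) ∧ ω.1 (i₂, M i₁) < ω.1 (i₂, M i₂))) ∧
      (∀ j₁ j₂ : Fin n, j₁ ≠ j₂ →
        ¬ (ω.2 (M.symm j₂, j₁) < ω.2 (M.symm j₁, j₁) ∧
           ω.2 (M.symm j₁, j₂) < ω.2 (M.symm j₂, j₂)))}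
      = ({X : Fin n × Fin n → ℝ | ∀ i₁ i₂ : Fin n, i₁ ≠ i₂ →
          ¬ (X (i₁, M i₂) < X (i₁, M i₁) ∧ X (i₂, M i₁) < X (i₂, M i₂))} ×ˢ
         {Y : Fin n × Fin n → ℝ | ∀ j₁ j₂ : Fin n, j₁ ≠ j₂ →
          ¬ (Y (M.symm j₂, j₁) < Y (M.symm j₁, j₁) ∧
             Y (M.symm j₁, j₂) < Y (M.symm j₂, j₂))}) := rfl
  rw [hsplit, Measure.prod_prod, h1, h2, ENNReal.toReal_mul, ENNReal.toReal_ofReal hI0, sq]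

/-- The probability that a fixed matching `M` is exchange-stable equals
`(∫_{[0,1]^n} ∏_{a<b}(1 - x_a x_b) dx)²`, independently of `M`. -/
theorem prob_eStable2_eq (n : ℕ) (M : Equiv.Perm (Fin n)) :
    (mu2 n {ω | eStable2 M ω}).toReal
      = (∫ x in (Set.univ.pi fun _ : Fin n => Set.Icc (0:ℝ) 1),
          ∏ p ∈ Finset.univ.filter (fun p : Fin n × Fin n => p.1 < p.2),
            (1 - x p.1 * x p.2)) ^ 2 :=
  prob_eStable2_eq' n M
end
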